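/- Let θ_0 ∈ ℝ^n, A > 1 and for I ⊂ {1,…,n} set G(I) = Σ_{i ∈ I^c} θ_{0,i}² + 2A² |I| log(ne/|I|). If G attains its minimum over subsets of {1,…,n} at a nonempty set Ĩ with G(Ĩ) ≤ C |Ĩ| log(ne/|Ĩ|), then with q = |Ĩ| the vector θ_0 satisfies: Σ_{i : |θ_{0,i}| < A√(2 log(n/q))} θ_{0,i}² ≤ C q log(ne/q) and #{i : |θ_{0,i}| ≥ A√(2 log(n/q))} ≥ q; in particular θ_0 satisfies the excessive-bias restriction with constant C_s = 1. -/

import Mathlib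

/-!
Write `q = |Ĩ|` and `t = A √(2 log(n/q))`. Dropping a coordinate `i` from the minimiser `Ĩ` raises
`G` by `θ₀ᵢ² - 2A² (q log(ne/q) - (q-1) log(ne/(q-1)))`, and since `x ↦ x log(ne/x)` is concave with
derivative `log(n/x)`, the bracket is at least `log(n/q)`. Minimality therefore puts every
coordinate of `Ĩ` at or above `t`: this gives the count, and the coordinates below `t` all lie
outside `Ĩ`, so their squared sum is at most `G(Ĩ)`.
-/

open MeasureTheory ProbabilityTheory Filter Set Real Asymptotics
open scoped ENNReal NNReal BigOperators

noncomputable section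

/-- Standard normal density `φ`. -/
def phiN (x : ℝ) : ℝ := (Real.sqrt (2 * Real.pi))⁻¹ * Real.exp (-(x ^ 2) / 2)

/-- Horseshoe prior density with global parameter `τ`. -/
def gHS (τ θ : ℝ) : ℝ :=
  ∫ l in Set.Ioi (0 : ℝ), phiN (θ / (l * τ)) / (l * τ) * (2 / (Real.pi * (1 + l ^ 2)))

/-- Unnormalised marginal posterior density of `θᵢ` given `Yᵢ = y` (parameter `τ`). -/
def postDens (τ y θ : ℝ) : ℝ := phiN (y - θ) * gHS τ θ

/-- Bayesian marginal density `ψ_τ(y)` of one observation. -/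
def margDens (τ y : ℝ) : ℝ := ∫ θ, postDens τ y θ

/-- Marginal posterior probability `Π(θᵢ ∈ A | Yᵢ = y, τ)`. -/
def postProb (τ y : ℝ) (A : Set ℝ) : ℝ := (∫ θ in A, postDens τ y θ) / margDens τ y

/-- Marginal posterior mean `θ̂ᵢ(τ)`. -/
def postMean (τ y : ℝ) : ℝ := (∫ θ, θ * postDens τ y θ) / margDens τ y

/-- Marginal posterior variance. -/
def postVar (τ y : ℝ) : ℝ :=
  (∫ θ, (θ - postMean τ y) ^ 2 * postDens τ y θ) / margDens τ y

/-- Marginal posterior fourth central moment. -/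
def postMom4 (τ y : ℝ) : ℝ :=
  (∫ θ, (θ - postMean τ y) ^ 4 * postDens τ y θ) / margDens τ y

/-- `ζ_τ = √(2 log (1/τ))`. -/
def zet (τ : ℝ) : ℝ := Real.sqrt (2 * Real.log (1 / τ))

/-- `τ_n(p) = (p/n) √(log (n/p))`. -/
def tauOpt (n p : ℕ) : ℝ := ((p : ℝ) / (n : ℝ)) * Real.sqrt (Real.log ((n : ℝ) / (p : ℝ)))

/-- The law `P_{θ₀}` of `Y^n`. -/
def Pdata {n : ℕ} (θ₀ : Fin n → ℝ) : Measure (Fin n → ℝ) :=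
  Measure.pi fun i => gaussianReal (θ₀ i) 1

/-- The standard normal upper `α`-quantile `z_α`. -/
def zquant (α : ℝ) : ℝ := sInf {z : ℝ | ((gaussianReal 0 1) (Set.Ioi z)).toReal ≤ α}

/-- Nearly black vectors `ℓ₀[p]`. -/
def nearlyBlack (n p : ℕ) : Set (Fin n → ℝ) :=
  {θ | ({i | θ i ≠ 0} : Set (Fin n)).ncard ≤ p}

/-- Unnormalised posterior density of the full vector `θ` given `Y^n = y` and `τ`. -/
def fullDens {n : ℕ} (τ : ℝ) (y θ : Fin n → ℝ) : ℝ := ∏ i, postDens τ (y i) (θ i)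

/-- Posterior probability `Π(θ ∈ A | Y^n = y, τ)` of a set of vectors. -/
def fullPostProb {n : ℕ} (τ : ℝ) (y : Fin n → ℝ) (A : Set (Fin n → ℝ)) : ℝ :=
  (∫ θ in A, fullDens τ y θ) / ∫ θ, fullDens τ y θ

/-- Posterior mean of the full vector (coordinatewise, by conditional independence). -/
def fullPostMean {n : ℕ} (τ : ℝ) (y : Fin n → ℝ) : Fin n → ℝ := fun i => postMean τ (y i)

/-- Euclidean distance on `ℝⁿ`. -/
def l2dist {n : ℕ} (a b : Fin n → ℝ) : ℝ := Real.sqrt (∑ i, (a i - b i) ^ 2)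

/-- Marginal likelihood of `τ`. -/
def lik {n : ℕ} (τ : ℝ) (y : Fin n → ℝ) : ℝ := ∏ i, margDens τ (y i)

/-- Unnormalised hierarchical posterior weight of `τ` given the data. -/
def hierWeight {n : ℕ} (pr : ℝ → ℝ) (y : Fin n → ℝ) (τ : ℝ) : ℝ := pr τ * lik τ y

/-- Hierarchical posterior distribution of `τ`. -/
def hierTauProb {n : ℕ} (pr : ℝ → ℝ) (y : Fin n → ℝ) (A : Set ℝ) : ℝ :=
  (∫ τ in A, hierWeight pr y τ) / ∫ τ, hierWeight pr y τ

/-- Hierarchical marginal posterior probability for coordinate `i`. -/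
def hierPostProb {n : ℕ} (pr : ℝ → ℝ) (y : Fin n → ℝ) (i : Fin n) (A : Set ℝ) : ℝ :=
  (∫ τ, hierWeight pr y τ * postProb τ (y i) A) / ∫ τ, hierWeight pr y τ

/-- Hierarchical marginal posterior mean for coordinate `i`. -/
def hierPostMean {n : ℕ} (pr : ℝ → ℝ) (y : Fin n → ℝ) (i : Fin n) : ℝ :=
  (∫ τ, hierWeight pr y τ * postMean τ (y i)) / ∫ τ, hierWeight pr y τ

/-- Hierarchical posterior probability of a set of vectors. -/
def hierFullPostProb {n : ℕ} (pr : ℝ → ℝ) (y : Fin n → ℝ) (A : Set (Fin n → ℝ)) : ℝ :=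
  (∫ τ, pr τ * ∫ θ in A, fullDens τ y θ) / ∫ τ, pr τ * ∫ θ, fullDens τ y θ

/-- Hierarchical posterior mean vector. -/
def hierFullPostMean {n : ℕ} (pr : ℝ → ℝ) (y : Fin n → ℝ) : Fin n → ℝ :=
  fun i => hierPostMean pr y i

/-- The functions `I_k`. -/
def Ik (τ k y : ℝ) : ℝ :=
  ∫ z in Set.Ioc (0 : ℝ) 1, z ^ k * (τ ^ 2 + (1 - τ ^ 2) * z)⁻¹ * Real.exp (y ^ 2 * z / 2)

/-- The function `m_τ`. -/
def mHS (τ y : ℝ) : ℝ :=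
  y ^ 2 * ((Ik τ (1 / 2) y - Ik τ (3 / 2) y) / Ik τ (-(1 / 2)) y) -
    Ik τ (1 / 2) y / Ik τ (-(1 / 2)) y

/-- The excessive-bias restriction with witness `q`. -/
def EBRwith (n : ℕ) (A Cs C : ℝ) (θ : Fin n → ℝ) (q : ℕ) : Prop :=
  1 ≤ q ∧
    (∑ i, if |θ i| < A * Real.sqrt (2 * Real.log ((n : ℝ) / (q : ℝ))) then (θ i) ^ 2 else 0)
        ≤ C * (q : ℝ) * Real.log ((n : ℝ) / (q : ℝ)) ∧
    (q : ℝ) / Cs ≤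
      (({i | A * Real.sqrt (2 * Real.log ((n : ℝ) / (q : ℝ))) ≤ |θ i|} : Set (Fin n)).ncard : ℝ)

/-- The excessive-bias restriction. -/
def EBR (n : ℕ) (A Cs C : ℝ) (θ : Fin n → ℝ) : Prop := ∃ q, EBRwith n A Cs C θ q

/-- The class `Θ[p]`. -/
def ThetaClass (n p : ℕ) (A Cs C : ℝ) : Set (Fin n → ℝ) :=
  {θ | θ ∈ nearlyBlack n p ∧ EBR n A Cs C θ}

/-- Smallest witness `q` in the excessive-bias restriction. -/
def qmin (n : ℕ) (A Cs C : ℝ) (θ : Fin n → ℝ) : ℕ := sInf {q | EBRwith n A Cs C θ q}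

/-- `p̃(θ₀)`: the number of coordinates above threshold for the smallest witness `q`. -/
def ptilde (n : ℕ) (A Cs C : ℝ) (θ : Fin n → ℝ) : ℕ :=
  ({i | A * Real.sqrt (2 * Real.log ((n : ℝ) / (qmin n A Cs C θ : ℝ))) ≤ |θ i|} :
    Set (Fin n)).ncard


def sparsityCost {n : ℕ} (θ : Fin n → ℝ) (A : ℝ) (I : Finset (Fin n)) : ℝ :=
  (∑ i ∈ Iᶜ, θ i ^ 2) + 2 * A ^ 2 * (I.card : ℝ) * Real.log ((n : ℝ) * Real.exp 1 / (I.card : ℝ))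

lemma log_mul_exp_one_div {a x : ℝ} (ha : 0 < a) (hx : 0 < x) :
    Real.log (a * Real.exp 1 / x) = Real.log a + 1 - Real.log x := by
  rw [Real.log_div (by positivity) hx.ne', Real.log_mul ha.ne' (Real.exp_pos 1).ne', Real.log_exp]

lemma log_div_le_mul_log_sub_mul_log {a x : ℝ} (ha : 0 < a) (hx : 1 ≤ x) :
    Real.log (a / x) ≤
      x * Real.log (a * Real.exp 1 / x) - (x - 1) * Real.log (a * Real.exp 1 / (x - 1)) := by
  rcases hx.eq_or_lt with rfl | hx
  · simp [Real.log_mul ha.ne' (Real.exp_pos 1).ne']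
  have hx1 : 0 < x - 1 := sub_pos.2 hx
  have hratio : (x - 1) * Real.log (x / (x - 1)) ≤ 1 := by
    calc (x - 1) * Real.log (x / (x - 1)) ≤ (x - 1) * (x / (x - 1) - 1) :=
          mul_le_mul_of_nonneg_left (Real.log_le_sub_one_of_pos (div_pos (by linarith) hx1)) hx1.le
      _ = 1 := by field_simp; ring
  rw [Real.log_div ha.ne' (by linarith), log_mul_exp_one_div ha (by linarith),
    log_mul_exp_one_div ha hx1]
  rw [Real.log_div (by linarith) hx1.ne'] at hratio
  nlinarith

section SparsityCost

variable {n : ℕ} (θ : Fin n → ℝ) (A : ℝ)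

lemma log_div_card_nonneg (I : Finset (Fin n)) : 0 ≤ Real.log ((n : ℝ) / (I.card : ℝ)) := by
  rcases I.eq_empty_or_nonempty with rfl | hI
  · simp
  exact Real.log_nonneg ((one_le_div (by exact_mod_cast hI.card_pos)).2
    (by exact_mod_cast card_finset_fin_le I))

lemma sum_sq_compl_le_sparsityCost (I : Finset (Fin n)) :
    ∑ i ∈ Iᶜ, θ i ^ 2 ≤ sparsityCost θ A I := by
  have hpen : 0 ≤ (I.card : ℝ) * Real.log ((n : ℝ) * Real.exp 1 / (I.card : ℝ)) := by
    rcases I.eq_empty_or_nonempty with rfl | hI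
    · simp
    have hcard : (I.card : ℝ) ≤ n := by exact_mod_cast card_finset_fin_le I
    have hq : (0 : ℝ) < I.card := by exact_mod_cast hI.card_pos
    refine mul_nonneg hq.le (Real.log_nonneg ?_)
    rw [le_div_iff₀ hq]
    nlinarith [Real.add_one_le_exp (1 : ℝ)]
  unfold sparsityCost
  nlinarith [sq_nonneg A]

lemma threshold_le_abs_of_sparsityCost_le_erase {I : Finset (Fin n)} {i : Fin n} (hi : i ∈ I)
    (hle : sparsityCost θ A I ≤ sparsityCost θ A (I.erase i)) :
    A * Real.sqrt (2 * Real.log ((n : ℝ) / (I.card : ℝ))) ≤ |θ i| := by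
  have hq : (1 : ℝ) ≤ I.card := by exact_mod_cast Finset.card_pos.2 ⟨i, hi⟩
  have hn : (0 : ℝ) < n := by
    linarith [(by exact_mod_cast card_finset_fin_le I : (I.card : ℝ) ≤ n)]
  have hsq : 2 * A ^ 2 * Real.log ((n : ℝ) / (I.card : ℝ)) ≤ θ i ^ 2 := by
    unfold sparsityCost at hle
    rw [Finset.compl_erase, Finset.sum_insert (by simpa using hi), Finset.card_erase_of_mem hi,
      Nat.cast_pred (Finset.card_pos.2 ⟨i, hi⟩)] at hle
    have := mul_le_mul_of_nonneg_left (log_div_le_mul_log_sub_mul_log hn hq)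
      (by positivity : (0 : ℝ) ≤ 2 * A ^ 2)
    nlinarith
  refine (le_abs_self _).trans (sq_le_sq.1 ?_)
  rw [mul_pow, Real.sq_sqrt (by linarith [log_div_card_nonneg I])]
  linarith

end SparsityCost

lemma sum_ite_abs_lt_le_sum_compl {ι : Type*} [Fintype ι] [DecidableEq ι] {θ : ι → ℝ} {t : ℝ}
    {I : Finset ι} (habove : ∀ i ∈ I, t ≤ |θ i|) :
    (∑ i, if |θ i| < t then θ i ^ 2 else 0) ≤ ∑ i ∈ Iᶜ, θ i ^ 2 := by
  rw [← Finset.sum_add_sum_compl I, Finset.sum_eq_zero fun i hi => if_neg (habove i hi).not_gt,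
    zero_add]
  exact Finset.sum_le_sum fun i _ => by split_ifs; exacts [le_rfl, sq_nonneg _]

lemma exists_pos_le_mul {S D : ℝ} (hD : 0 ≤ D) (hS : D = 0 → S ≤ 0) : ∃ c > 0, S ≤ c * D := by
  rcases hD.eq_or_lt with hD | hD
  · exact ⟨1, one_pos, by simpa [← hD] using hS hD.symm⟩
  refine ⟨|S| / D + 1, by positivity, ?_⟩
  rw [add_mul, div_mul_cancel₀ _ hD.ne']
  linarith [le_abs_self S]

theorem stmt_19_general (n : ℕ) (θ₀ : Fin n → ℝ) (A C : ℝ)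
    (G : Finset (Fin n) → ℝ)
    (hG : ∀ I : Finset (Fin n),
      G I = (∑ i ∈ Iᶜ, (θ₀ i) ^ 2) +
        2 * A ^ 2 * (I.card : ℝ) * Real.log ((n : ℝ) * Real.exp 1 / (I.card : ℝ)))
    (Itil : Finset (Fin n)) (hne : Itil.Nonempty)
    (hmin : ∀ I : Finset (Fin n), G Itil ≤ G I)
    (hbd : G Itil ≤ C * (Itil.card : ℝ) *
      Real.log ((n : ℝ) * Real.exp 1 / (Itil.card : ℝ))) :
    ((∑ i, if |θ₀ i| < A * Real.sqrt (2 * Real.log ((n : ℝ) / (Itil.card : ℝ))) then (θ₀ i) ^ 2 else 0) ≤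
        C * (Itil.card : ℝ) * Real.log ((n : ℝ) * Real.exp 1 / (Itil.card : ℝ))) ∧
    ((Itil.card : ℝ) ≤ (({i | A * Real.sqrt (2 * Real.log ((n : ℝ) / (Itil.card : ℝ))) ≤ |θ₀ i|} : Set (Fin n)).ncard : ℝ)) ∧
    (∃ C' > 0, EBRwith n A 1 C' θ₀ Itil.card) := by
  obtain rfl : G = sparsityCost θ₀ A := funext hG
  set q := Itil.card
  set t := A * Real.sqrt (2 * Real.log ((n : ℝ) / (q : ℝ)))
  have habove : ∀ i ∈ Itil, t ≤ |θ₀ i| := fun i hi =>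
    threshold_le_abs_of_sparsityCost_le_erase θ₀ A hi (hmin _)
  have hsum : (∑ i, if |θ₀ i| < t then θ₀ i ^ 2 else 0) ≤ C * q * Real.log (n * Real.exp 1 / q) :=
    (sum_ite_abs_lt_le_sum_compl habove).trans
      ((sum_sq_compl_le_sparsityCost θ₀ A Itil).trans hbd)
  have hcard : (q : ℝ) ≤ ({i | t ≤ |θ₀ i|} : Set (Fin n)).ncard := by
    have := Set.ncard_le_ncard (fun i hi => habove i hi : (Itil : Set (Fin n)) ⊆ {i | t ≤ |θ₀ i|})
    rwa [Set.ncard_coe_finset, ← Nat.cast_le (α := ℝ)] at this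
  have hq : 0 < q := hne.card_pos
  -- When `log(n/q) = 0` the threshold is `0`, so no coordinate counts towards the bias.
  obtain ⟨C', hC', hbias⟩ := exists_pos_le_mul (S := ∑ i, if |θ₀ i| < t then θ₀ i ^ 2 else 0)
    (mul_nonneg (Nat.cast_nonneg q) (log_div_card_nonneg Itil)) fun hD => by
      have hlog : Real.log ((n : ℝ) / (q : ℝ)) = 0 :=
        (mul_eq_zero.1 hD).resolve_left (Nat.cast_pos.2 hq).ne'
      have ht : t = 0 := by simp [t, hlog]
      rw [ht]
      exact (Finset.sum_eq_zero fun i _ => if_neg (abs_nonneg _).not_gt).le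
  exact ⟨hsum, hcard, C', hC', hq, by rwa [mul_assoc], by rwa [div_one]⟩

theorem stmt_19 (n : ℕ) (θ₀ : Fin n → ℝ) (A C : ℝ) (hA : 1 < A)
    (G : Finset (Fin n) → ℝ)
    (hG : ∀ I : Finset (Fin n),
      G I = (∑ i ∈ Iᶜ, (θ₀ i) ^ 2) +
        2 * A ^ 2 * (I.card : ℝ) * Real.log ((n : ℝ) * Real.exp 1 / (I.card : ℝ)))
    (Itil : Finset (Fin n)) (hne : Itil.Nonempty)
    (hmin : ∀ I : Finset (Fin n), G Itil ≤ G I)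
    (hbd : G Itil ≤ C * (Itil.card : ℝ) *
      Real.log ((n : ℝ) * Real.exp 1 / (Itil.card : ℝ))) :
    ((∑ i, if |θ₀ i| < A * Real.sqrt (2 * Real.log ((n : ℝ) / (Itil.card : ℝ))) then (θ₀ i) ^ 2 else 0) ≤
        C * (Itil.card : ℝ) * Real.log ((n : ℝ) * Real.exp 1 / (Itil.card : ℝ))) ∧
    ((Itil.card : ℝ) ≤ (({i | A * Real.sqrt (2 * Real.log ((n : ℝ) / (Itil.card : ℝ))) ≤ |θ₀ i|} : Set (Fin n)).ncard : ℝ)) ∧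
    (∃ C' > 0, EBRwith n A 1 C' θ₀ Itil.card) :=
  stmt_19_general n θ₀ A C G hG Itil hne hmin hbd

end
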